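/- arXiv:2506.22393 — 2 statements merged into one kernel-verified Lean document; each statement's English description precedes it below -/
import Mathlib

section
/- Domain adaptation generalization bound: let S and T be probability distributions on X × {0,1}, let Φ be a class of hypotheses φ : X → {0,1}, and define ε_D(φ) = P_{(x,y)~D}[φ(x) ≠ y]. Define the Φ-divergence d_Φ(S,T) = 2·sup_{φ∈Φ} |P_{x~S_X}[φ(x)=1] − P_{x~T_X}[φ(x)=1]| and κ = inf_{φ'∈Φ} (ε_S(φ') + ε_T(φ')). Then, assuming Φ is symmetric under pointwise symmetric differences (i.e., for any φ, φ' ∈ Φ the indicator x ↦ 1[φ(x)≠φ'(x)] equals 1[ψ(x)=1] for some ψ ∈ Φ), for every φ ∈ Φ: ε_T(φ) ≤ ε_S(φ) + d_Φ(S,T) + κ. -/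
/-!
Let `E = {x | φ x ≠ φ* x}` be the region where `φ` and `φ*` disagree. Off `E`, an error of `φ`
is an error of `φ*`, so `ε_T(φ) ≤ ε_T(φ*) + T_X(E)`; on `E`, one of `φ`, `φ*` errs, so
`S_X(E) ≤ ε_S(φ) + ε_S(φ*)`. Since `Φ` is closed under symmetric differences, `E` is the
positive region of some `ψ ∈ Φ`, so `T_X(E) ≤ S_X(E) + d_Φ(S_X, T_X)`.
-/

open MeasureTheory

/-- Classification error of a binary hypothesis under a distribution on X × Bool. -/
noncomputable def clsErr {X : Type*} [MeasurableSpace X]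
    (D : Measure (X × Bool)) (φ : X → Bool) : ℝ :=
  (D {p | φ p.1 ≠ p.2}).toReal

/-- The Φ-divergence between two distributions on the feature space. -/
noncomputable def dPhi {X : Type*} [MeasurableSpace X]
    (Φ : Set (X → Bool)) (S T : Measure X) : ℝ :=
  2 * sSup {r : ℝ | ∃ φ ∈ Φ,
    r = |(S {x | φ x = true}).toReal - (T {x | φ x = true}).toReal|}

section

variable {X : Type*} [MeasurableSpace X]

theorem clsErr_le_clsErr_add_disagreement (D : Measure (X × Bool)) [IsFiniteMeasure D]
    (φ φ' : X → Bool) :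
    clsErr D φ ≤ clsErr D φ' + (D.map Prod.fst).real {x | φ x ≠ φ' x} := by
  have hsub : {p : X × Bool | φ p.1 ≠ p.2} ⊆
      {p | φ' p.1 ≠ p.2} ∪ Prod.fst ⁻¹' {x | φ x ≠ φ' x} := by
    rintro ⟨x, y⟩ hx
    by_cases h : φ' x = y
    · exact Or.inr fun hφ ↦ hx (hφ.trans h)
    · exact Or.inl h
  calc clsErr D φ
      ≤ clsErr D φ' + D.real (Prod.fst ⁻¹' {x | φ x ≠ φ' x}) :=
        (measureReal_mono hsub).trans (measureReal_union_le _ _)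
    _ ≤ clsErr D φ' + (D.map Prod.fst).real {x | φ x ≠ φ' x} := by
        gcongr
        exact ENNReal.toReal_mono (measure_ne_top _ _)
          (Measure.le_map_apply measurable_fst.aemeasurable _)

theorem measureReal_map_fst_disagreement_le (D : Measure (X × Bool)) [IsFiniteMeasure D]
    {φ φ' : X → Bool} (hmeas : MeasurableSet {x | φ x ≠ φ' x}) :
    (D.map Prod.fst).real {x | φ x ≠ φ' x} ≤ clsErr D φ + clsErr D φ' := by
  have hsub : Prod.fst ⁻¹' {x | φ x ≠ φ' x} ⊆
      {p : X × Bool | φ p.1 ≠ p.2} ∪ {p | φ' p.1 ≠ p.2} := by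
    rintro ⟨x, y⟩ hx
    by_cases h : φ x = y
    · exact Or.inr fun hφ' ↦ hx (h.trans hφ'.symm)
    · exact Or.inl h
  rw [map_measureReal_apply measurable_fst hmeas]
  exact (measureReal_mono hsub).trans (measureReal_union_le _ _)

theorem two_mul_abs_sub_le_dPhi {Φ : Set (X → Bool)} (S T : Measure X)
    [IsFiniteMeasure S] [IsFiniteMeasure T] {ψ : X → Bool} (hψ : ψ ∈ Φ) :
    2 * |S.real {x | ψ x = true} - T.real {x | ψ x = true}| ≤ dPhi Φ S T := by
  have hbdd : BddAbove {r : ℝ | ∃ φ ∈ Φ,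
      r = |(S {x | φ x = true}).toReal - (T {x | φ x = true}).toReal|} := by
    refine ⟨S.real Set.univ + T.real Set.univ, ?_⟩
    rintro r ⟨φ, -, rfl⟩
    calc |S.real {x | φ x = true} - T.real {x | φ x = true}|
        ≤ |S.real {x | φ x = true}| + |T.real {x | φ x = true}| := abs_sub _ _
      _ ≤ S.real Set.univ + T.real Set.univ := by
        rw [abs_of_nonneg measureReal_nonneg, abs_of_nonneg measureReal_nonneg]
        exact add_le_add (measureReal_mono (Set.subset_univ _))
          (measureReal_mono (Set.subset_univ _))
  exact mul_le_mul_of_nonneg_left (le_csSup hbdd ⟨ψ, hψ, rfl⟩) zero_le_two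

theorem measureReal_le_measureReal_add_dPhi {Φ : Set (X → Bool)} (S T : Measure X)
    [IsFiniteMeasure S] [IsFiniteMeasure T] {ψ : X → Bool} (hψ : ψ ∈ Φ) :
    T.real {x | ψ x = true} ≤ S.real {x | ψ x = true} + dPhi Φ S T := by
  have h := two_mul_abs_sub_le_dPhi S T hψ
  have h' := neg_abs_le (S.real {x | ψ x = true} - T.real {x | ψ x = true})
  linarith [abs_nonneg (S.real {x | ψ x = true} - T.real {x | ψ x = true})]

end

theorem domain_adaptation_bound_general {X : Type*} [MeasurableSpace X]
    (S T : Measure (X × Bool)) [IsProbabilityMeasure S] [IsProbabilityMeasure T]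
    (Φ : Set (X → Bool)) (hΦmeas : ∀ φ ∈ Φ, Measurable φ)
    (hsymdiff : ∀ φ ∈ Φ, ∀ φ' ∈ Φ, ∃ ψ ∈ Φ, ∀ x, (ψ x = true ↔ φ x ≠ φ' x))
    (φstar : X → Bool) (hφstar : φstar ∈ Φ)
    (φ : X → Bool) (hφ : φ ∈ Φ) :
    clsErr T φ ≤ clsErr S φ + dPhi Φ (S.map Prod.fst) (T.map Prod.fst)
      + (clsErr S φstar + clsErr T φstar) := by
  obtain ⟨ψ, hψΦ, hψ⟩ := hsymdiff φ hφ φstar hφstar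
  have hE : {x | ψ x = true} = {x | φ x ≠ φstar x} := Set.ext hψ
  have hEmeas : MeasurableSet {x | ψ x = true} := hΦmeas ψ hψΦ (measurableSet_singleton true)
  have hTS := measureReal_le_measureReal_add_dPhi (S.map Prod.fst) (T.map Prod.fst) hψΦ
  rw [hE] at hEmeas hTS
  have hT := clsErr_le_clsErr_add_disagreement T φ φstar
  have hS := measureReal_map_fst_disagreement_le S hEmeas
  linarith

/-- Domain adaptation generalization bound (Ben-David et al.):
ε_T(φ) ≤ ε_S(φ) + d_Φ(S,T) + κ, where κ is attained by φ*. -/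
theorem domain_adaptation_bound {X : Type*} [MeasurableSpace X]
    (S T : Measure (X × Bool)) [IsProbabilityMeasure S] [IsProbabilityMeasure T]
    (Φ : Set (X → Bool)) (hΦmeas : ∀ φ ∈ Φ, Measurable φ)
    (hsymdiff : ∀ φ ∈ Φ, ∀ φ' ∈ Φ, ∃ ψ ∈ Φ, ∀ x, (ψ x = true ↔ φ x ≠ φ' x))
    (φstar : X → Bool) (hφstar : φstar ∈ Φ)
    (hmin : ∀ ψ ∈ Φ, clsErr S φstar + clsErr T φstar ≤ clsErr S ψ + clsErr T ψ)
    (φ : X → Bool) (hφ : φ ∈ Φ) :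
    clsErr T φ ≤ clsErr S φ + dPhi Φ (S.map Prod.fst) (T.map Prod.fst)
      + (clsErr S φstar + clsErr T φstar) :=
  domain_adaptation_bound_general S T Φ hΦmeas hsymdiff φstar hφstar φ hφ
end

section
/- InfoNCE as a mutual information lower bound (tractable finite form): let p be a joint probability mass function of (Z, Z̃) on finite sets, and suppose the critic is optimal, i.e., the score function is f(z, z̃) = log( p(z,z̃)/(p_Z(z)·p_{Z̃}(z̃)) ). Then for K ≥ 1 i.i.d. samples (Z₁,Z̃₁),…,(Z_K,Z̃_K) from p, the expected InfoNCE objective E[ log( e^{f(Z₁,Z̃₁)} / ((1/K)·Σ_{k=1}^K e^{f(Z_k,Z̃₁)}) ) ] ≤ I(Z; Z̃), equivalently I(Z;Z̃) ≥ log K − E[L_CL] where L_CL = −log( e^{f(Z₁,Z̃₁)} / Σ_{k=1}^K e^{f(Z_k,Z̃₁)} ). -/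
open Finset Real

noncomputable def probOf {Ω α : Type*} [Fintype Ω] [DecidableEq α]
    (p : Ω → ℝ) (X : Ω → α) (a : α) : ℝ :=
  ∑ ω, if X ω = a then p ω else 0

noncomputable def shannonEntropy {Ω α : Type*} [Fintype Ω] [Fintype α] [DecidableEq α]
    (p : Ω → ℝ) (X : Ω → α) : ℝ :=
  -∑ a, probOf p X a * Real.log (probOf p X a)

noncomputable def condEntropy' {Ω α β : Type*} [Fintype Ω] [Fintype α] [DecidableEq α]
    [Fintype β] [DecidableEq β] (p : Ω → ℝ) (X : Ω → α) (Y : Ω → β) : ℝ :=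
  shannonEntropy p (fun ω => (X ω, Y ω)) - shannonEntropy p Y

noncomputable def mutualInfo {Ω α β : Type*} [Fintype Ω] [Fintype α] [DecidableEq α]
    [Fintype β] [DecidableEq β] (p : Ω → ℝ) (X : Ω → α) (Y : Ω → β) : ℝ :=
  shannonEntropy p X - condEntropy' p X Y

/-!
With the optimal critic, `exp f = p / (p_Z p_Z̃)` is the density ratio `g`, so the expected
InfoNCE objective is `I(Z; Z̃) - E[log S]` with `S = (1/K) ∑ₖ g(Zₖ, Z̃₁)`. As `log S ≥ 1 - S⁻¹`,
it suffices that `E[S⁻¹] = 1`. Integrating out `Z̃₂, …, Z̃_K` and writing `p = p_Z p_Z̃ g` turns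
`E[S⁻¹]` into the mean of `K g(Z₁, Z̃) / ∑ₖ g(Zₖ, Z̃)` for independent `Z̃ ~ p_Z̃` and
`Z₁, …, Z_K ~ p_Z`; by exchangeability the `K` fractions `g(Zⱼ, Z̃) / ∑ₖ g(Zₖ, Z̃)` have the
same mean, and they sum to `1`.
-/

theorem Real.log_div_one_div_mul {a b c : ℝ} (ha : 0 < a) (hb : 0 < b) (hc : 0 < c) :
    log (a / ((1 / c) * b)) = log c + log (a / b) := by
  rw [show a / ((1 / c) * b) = c * (a / b) by field_simp, log_mul hc.ne' (div_pos ha hb).ne']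

section ProductSums

variable {ι γ : Type*} [Fintype ι] [DecidableEq ι] [Fintype γ]

theorem sum_pi_prod_mul_apply (q : ι → γ → ℝ) (i : ι) (F : γ → ℝ) :
    ∑ t : ι → γ, (∏ k, q k (t k)) * F (t i)
      = (∑ y, q i y * F y) * ∏ k ∈ univ.erase i, ∑ y, q k y := by
  let q' := Function.update q i fun y => q i y * F y
  have hq'i : q' i = fun y => q i y * F y := Function.update_self ..
  have hq'ne : ∀ k ∈ univ.erase i, q' k = q k := fun k hk =>
    Function.update_of_ne (ne_of_mem_erase hk) _ _
  calc ∑ t : ι → γ, (∏ k, q k (t k)) * F (t i) = ∑ t : ι → γ, ∏ k, q' k (t k) :=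
        sum_congr rfl fun t _ => by
          rw [← mul_prod_erase univ (fun k => q k (t k)) (mem_univ i),
            ← mul_prod_erase univ (fun k => q' k (t k)) (mem_univ i), hq'i,
            prod_congr rfl fun k hk => congrFun (hq'ne k hk) (t k)]
          ring
    _ = ∏ k, ∑ y, q' k y := (Fintype.prod_sum _).symm
    _ = _ := by
      rw [← mul_prod_erase univ _ (mem_univ i), hq'i,
        prod_congr rfl fun k hk => by rw [hq'ne k hk]]

theorem sum_pi_prod_eq_one {q : γ → ℝ} (hq : ∑ y, q y = 1) :
    ∑ t : ι → γ, ∏ k, q (t k) = 1 := by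
  rw [← Fintype.prod_sum, hq, prod_const_one]

theorem sum_pi_prod_mul_apply_of_sum_eq_one {q : γ → ℝ} (hq : ∑ y, q y = 1) (i : ι)
    (F : γ → ℝ) : ∑ t : ι → γ, (∏ k, q (t k)) * F (t i) = ∑ y, q y * F y := by
  rw [sum_pi_prod_mul_apply (fun _ => q), hq, prod_const_one, mul_one]

theorem sum_pi_prod_mul_div_sum_eq_one_div_card {q h : γ → ℝ} (hq : ∑ y, q y = 1)
    (hh : ∀ y, 0 < h y) (i : ι) :
    ∑ t : ι → γ, (∏ k, q (t k)) * (h (t i) / ∑ k, h (t k)) = 1 / Fintype.card ι := by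
  set T : ι → ℝ := fun j => ∑ t : ι → γ, (∏ k, q (t k)) * (h (t j) / ∑ k, h (t k))
  have hT : ∀ j, T j = T i := fun j => by
    refine Fintype.sum_equiv ((Equiv.swap i j).arrowCongr (Equiv.refl γ)) _ _ fun t => ?_
    change _ = (∏ k, q (t (Equiv.swap i j k))) *
      (h (t (Equiv.swap i j i)) / ∑ k, h (t (Equiv.swap i j k)))
    rw [Equiv.swap_apply_left, Equiv.prod_comp (Equiv.swap i j) fun k => q (t k),
      Equiv.sum_comp (Equiv.swap i j) fun k => h (t k)]
  have hsum : ∑ j, T j = 1 :=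
    calc ∑ j, T j = ∑ t : ι → γ, ∑ j, (∏ k, q (t k)) * (h (t j) / ∑ k, h (t k)) := sum_comm
      _ = ∑ t : ι → γ, ∏ k, q (t k) := sum_congr rfl fun t _ => by
        rw [← mul_sum, ← sum_div, div_self (sum_pos (fun k _ => hh _) ⟨i, mem_univ i⟩).ne',
          mul_one]
      _ = 1 := sum_pi_prod_eq_one hq
  rw [sum_congr rfl fun j _ => hT j, sum_const, card_univ, nsmul_eq_mul] at hsum
  exact eq_one_div_of_mul_eq_one_right hsum

end ProductSums

section JointDistribution

variable {α β : Type*} [Fintype α] [Fintype β]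

noncomputable def densityRatio (p : α × β → ℝ) (x : α × β) : ℝ :=
  p x / ((∑ w, p (x.1, w)) * ∑ w, p (w, x.2))

theorem densityRatio_pos {p : α × β → ℝ} (hp : ∀ x, 0 < p x) (x : α × β) :
    0 < densityRatio p x :=
  div_pos (hp x) (mul_pos (sum_pos (fun _ _ => hp _) ⟨x.2, mem_univ _⟩)
    (sum_pos (fun _ _ => hp _) ⟨x.1, mem_univ _⟩))

theorem mean_densityRatio_pos {ι : Type*} [Fintype ι] [Nonempty ι] {p : α × β → ℝ}
    (hp : ∀ x, 0 < p x) (z : ι → α) (t : β) :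
    0 < (1 / Fintype.card ι : ℝ) * ∑ k, densityRatio p (z k, t) :=
  mul_pos (one_div_pos.2 (Nat.cast_pos.2 Fintype.card_pos))
    (sum_pos (fun _ _ => densityRatio_pos hp _) univ_nonempty)

theorem marginal_mul_marginal_mul_densityRatio {p : α × β → ℝ} (hp : ∀ x, 0 < p x)
    (z : α) (t : β) : (∑ w, p (z, w)) * (∑ w, p (w, t)) * densityRatio p (z, t) = p (z, t) :=
  mul_div_cancel₀ _ (mul_pos (sum_pos (fun _ _ => hp _) ⟨t, mem_univ _⟩)
    (sum_pos (fun _ _ => hp _) ⟨z, mem_univ _⟩)).ne'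

theorem sum_pi_prod_mul_fst_snd {ι : Type*} [Fintype ι] [DecidableEq ι] (p : α × β → ℝ)
    (i : ι) (φ : (ι → α) → β → ℝ) :
    ∑ ω : ι → α × β, (∏ k, p (ω k)) * φ (fun k => (ω k).1) (ω i).2
      = ∑ z : ι → α, (∏ k ∈ univ.erase i, ∑ y, p (z k, y)) * ∑ y, p (z i, y) * φ z y := by
  rw [← (Equiv.arrowProdEquivProdArrow ι (fun _ => α) fun _ => β).symm.sum_comp,
    Fintype.sum_prod_type]
  refine sum_congr rfl fun z _ => ?_
  rw [mul_comm]
  exact sum_pi_prod_mul_apply (fun k y => p (z k, y)) i (φ z)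

theorem probOf_fst [DecidableEq α] (p : α × β → ℝ) (z : α) :
    probOf p Prod.fst z = ∑ w, p (z, w) := by
  simp [probOf, Fintype.sum_prod_type_right]

theorem probOf_snd [DecidableEq β] (p : α × β → ℝ) (t : β) :
    probOf p Prod.snd t = ∑ w, p (w, t) := by
  simp [probOf, Fintype.sum_prod_type]

theorem probOf_fst_snd [DecidableEq α] [DecidableEq β] (p : α × β → ℝ) :
    probOf p (fun x => (x.1, x.2)) = p := by
  funext x
  simp [probOf]

theorem mutualInfo_fst_snd [DecidableEq α] [DecidableEq β] {p : α × β → ℝ}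
    (hp : ∀ x, 0 ≤ p x) :
    mutualInfo p Prod.fst Prod.snd = ∑ x, p x * log (densityRatio p x) := by
  have hterm : ∀ x, p x * log (densityRatio p x) = p x * log (p x)
      - p x * log (∑ w, p (x.1, w)) - p x * log (∑ w, p (w, x.2)) := fun x => by
    rcases (hp x).eq_or_lt with h0 | hpos
    · simp [← h0]
    have hZ : 0 < ∑ w, p (x.1, w) :=
      hpos.trans_le (single_le_sum (f := fun w => p (x.1, w)) (fun _ _ => hp _) (mem_univ x.2))
    have hT : 0 < ∑ w, p (w, x.2) :=
      hpos.trans_le (single_le_sum (f := fun w => p (w, x.2)) (fun _ _ => hp _) (mem_univ x.1))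
    rw [densityRatio, log_div hpos.ne' (mul_pos hZ hT).ne', log_mul hZ.ne' hT.ne']
    ring
  have hfst : ∑ x, p x * log (∑ w, p (x.1, w))
      = ∑ z, (∑ w, p (z, w)) * log (∑ w, p (z, w)) := by
    simp_rw [Fintype.sum_prod_type, ← sum_mul]
  have hsnd : ∑ x, p x * log (∑ w, p (w, x.2))
      = ∑ t, (∑ w, p (w, t)) * log (∑ w, p (w, t)) := by
    simp_rw [Fintype.sum_prod_type_right, ← sum_mul]
  simp only [mutualInfo, condEntropy', shannonEntropy, probOf_fst, probOf_snd, probOf_fst_snd]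
  rw [sum_congr rfl fun x _ => hterm x, sum_sub_distrib, sum_sub_distrib, hfst, hsnd]
  ring

theorem sum_pi_prod_mul_inv_mean_densityRatio {ι : Type*} [Fintype ι] [DecidableEq ι]
    {p : α × β → ℝ} (hp : ∀ x, 0 < p x) (hp1 : ∑ x, p x = 1) (i : ι) :
    ∑ ω : ι → α × β, (∏ k, p (ω k)) *
      ((1 / Fintype.card ι) * ∑ k, densityRatio p ((ω k).1, (ω i).2))⁻¹ = 1 := by
  have hcard : (Fintype.card ι : ℝ) ≠ 0 := Nat.cast_ne_zero.2 (Fintype.card_pos_iff.2 ⟨i⟩).ne'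
  have hpZ : ∑ z, ∑ w, p (z, w) = 1 := by rw [← Fintype.sum_prod_type, hp1]
  have hpT : ∑ t, ∑ w, p (w, t) = 1 := by rw [← Fintype.sum_prod_type_right, hp1]
  have hpt : ∀ (z : ι → α) (t : β),
      (∏ k ∈ univ.erase i, ∑ w, p (z k, w)) *
        (p (z i, t) * ((1 / Fintype.card ι) * ∑ k, densityRatio p (z k, t))⁻¹)
      = (∑ w, p (w, t)) * Fintype.card ι * ((∏ k, ∑ w, p (z k, w)) *
        (densityRatio p (z i, t) / ∑ k, densityRatio p (z k, t))) := fun z t => by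
    have hsum : ∑ k, densityRatio p (z k, t) ≠ 0 :=
      (sum_pos (fun k _ => densityRatio_pos hp _) ⟨i, mem_univ i⟩).ne'
    rw [← mul_prod_erase univ _ (mem_univ i),
      ← marginal_mul_marginal_mul_densityRatio hp (z i) t]
    field_simp
  calc _ = ∑ z : ι → α, ∑ t, (∏ k ∈ univ.erase i, ∑ w, p (z k, w)) *
        (p (z i, t) * ((1 / Fintype.card ι) * ∑ k, densityRatio p (z k, t))⁻¹) := by
        rw [sum_pi_prod_mul_fst_snd p i fun z t =>
          ((1 / Fintype.card ι) * ∑ k, densityRatio p (z k, t))⁻¹]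
        exact sum_congr rfl fun z _ => mul_sum _ _ _
    _ = ∑ t, (∑ w, p (w, t)) * Fintype.card ι * ∑ z : ι → α, (∏ k, ∑ w, p (z k, w)) *
        (densityRatio p (z i, t) / ∑ k, densityRatio p (z k, t)) := by
        rw [sum_comm]
        exact sum_congr rfl fun t _ => by rw [mul_sum]; exact sum_congr rfl fun z _ => hpt z t
    _ = ∑ t, ∑ w, p (w, t) := sum_congr rfl fun t _ => by
        rw [sum_pi_prod_mul_div_sum_eq_one_div_card hpZ (fun z => densityRatio_pos hp (z, t)) i]
        field_simp
    _ = 1 := hpT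

theorem sum_pi_prod_mul_log_mean_densityRatio_nonneg {ι : Type*} [Fintype ι] [DecidableEq ι]
    {p : α × β → ℝ} (hp : ∀ x, 0 < p x) (hp1 : ∑ x, p x = 1) (i : ι) :
    0 ≤ ∑ ω : ι → α × β, (∏ k, p (ω k)) *
      log ((1 / Fintype.card ι) * ∑ k, densityRatio p ((ω k).1, (ω i).2)) := by
  have := Nonempty.intro i
  calc (0 : ℝ) = ∑ ω : ι → α × β, (∏ k, p (ω k)) *
        (1 - ((1 / Fintype.card ι) * ∑ k, densityRatio p ((ω k).1, (ω i).2))⁻¹) := by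
        simp only [mul_sub, mul_one, sum_sub_distrib, sum_pi_prod_eq_one hp1,
          sum_pi_prod_mul_inv_mean_densityRatio hp hp1 i, sub_self]
    _ ≤ _ := sum_le_sum fun ω _ => mul_le_mul_of_nonneg_left
        (one_sub_inv_le_log_of_pos (mean_densityRatio_pos hp _ _))
        (prod_nonneg fun k _ => (hp _).le)

theorem sum_pi_prod_mul_log_densityRatio_div_mean_le_mutualInfo {ι : Type*} [Fintype ι]
    [DecidableEq ι] [DecidableEq α] [DecidableEq β] {p : α × β → ℝ} (hp : ∀ x, 0 < p x)
    (hp1 : ∑ x, p x = 1) (i : ι) :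
    ∑ ω : ι → α × β, (∏ k, p (ω k)) * log (densityRatio p (ω i) /
      ((1 / Fintype.card ι) * ∑ k, densityRatio p ((ω k).1, (ω i).2)))
      ≤ mutualInfo p Prod.fst Prod.snd := by
  have := Nonempty.intro i
  simp only [log_div (densityRatio_pos hp _).ne' (mean_densityRatio_pos hp _ _).ne', mul_sub,
    sum_sub_distrib]
  rw [sum_pi_prod_mul_apply_of_sum_eq_one hp1 i fun x => log (densityRatio p x),
    mutualInfo_fst_snd fun x => (hp x).le]
  linarith [sum_pi_prod_mul_log_mean_densityRatio_nonneg hp hp1 i]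

end JointDistribution

/-- InfoNCE as a mutual information lower bound (Proposition 1): with the
optimal critic f(z,zt) = log(p(z,zt)/(p_Z(z)·p_{Z̃}(zt))) and K i.i.d. samples,
the expected InfoNCE objective is at most I(Z;Z̃); equivalently
I(Z;Z̃) ≥ log K − E[L_CL]. -/
theorem infoNCE_mutual_information_bound {α β : Type*}
    [Fintype α] [DecidableEq α] [Fintype β] [DecidableEq β]
    (p : α × β → ℝ) (hp : ∀ x, 0 < p x) (hp1 : ∑ x, p x = 1)
    (K : ℕ) (hK : 1 ≤ K) (f : α × β → ℝ)
    (hf : ∀ z zt, f (z, zt) =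
      Real.log (p (z, zt) / ((∑ w, p (z, w)) * (∑ w, p (w, zt))))) :
    (∑ ω : Fin K → α × β, (∏ k, p (ω k)) *
        Real.log (Real.exp (f (ω ⟨0, hK⟩)) /
          ((1 / K : ℝ) * ∑ k, Real.exp (f ((ω k).1, (ω ⟨0, hK⟩).2)))))
      ≤ mutualInfo p Prod.fst Prod.snd ∧
    Real.log K - (∑ ω : Fin K → α × β, (∏ k, p (ω k)) *
        (-Real.log (Real.exp (f (ω ⟨0, hK⟩)) /
          (∑ k, Real.exp (f ((ω k).1, (ω ⟨0, hK⟩).2))))))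
      ≤ mutualInfo p Prod.fst Prod.snd := by
  have hexp : ∀ x, exp (f x) = densityRatio p x := fun x => by
    rw [hf x.1 x.2]
    exact exp_log (densityRatio_pos hp x)
  have hbound := sum_pi_prod_mul_log_densityRatio_div_mean_le_mutualInfo hp hp1 (⟨0, hK⟩ : Fin K)
  rw [Fintype.card_fin] at hbound
  have hlog : ∀ ω : Fin K → α × β,
      -log (densityRatio p (ω ⟨0, hK⟩) / ∑ k, densityRatio p ((ω k).1, (ω ⟨0, hK⟩).2))
        = log K - log (densityRatio p (ω ⟨0, hK⟩) /
          ((1 / K : ℝ) * ∑ k, densityRatio p ((ω k).1, (ω ⟨0, hK⟩).2))) := fun ω => by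
    rw [log_div_one_div_mul (densityRatio_pos hp _)
      (sum_pos (fun _ _ => densityRatio_pos hp _) ⟨⟨0, hK⟩, mem_univ _⟩) (by exact_mod_cast hK)]
    ring
  simp only [hexp, hlog, mul_sub, sum_sub_distrib, ← sum_mul, sum_pi_prod_eq_one hp1]
  exact ⟨hbound, by linarith⟩
end
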